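/- Let n ≥ 1, let f : {0,1}^n → {0,1}, and let ψ_f ∈ ℂ^({0,1}^n × {0,1}) be the uniform quantum example of f, i.e. (ψ_f)_{(x,b)} = 2^{-n/2} if b = f(x) and 0 otherwise. Then for every subset T ⊆ {0,1}^n, Σ_{S ∈ T} |(H_{n+1} ψ_f)_{(S,1)}|² = (1/2) · Σ_{S ∈ T} f̂(S)², where f̂ denotes the Fourier transform of (−1)^f. Equivalently, the observable M' = H_{n+1} · Π · M̃ · Π · H_{n+1}, with M̃ = Σ_{S ∈ T} |S⟩⟨S| ⊗ I₂ and Π = I_{2^n} ⊗ |1⟩⟨1|, satisfies ⟨ψ_f, M' ψ_f⟩ = (1/2) · Σ_{S ∈ T} f̂(S)², so a single quantum statistical query estimates the Fourier mass of f on T. -/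

import Mathlib

open Finset Matrix

/-- The character `χ_S(x) = (-1)^{S·x}` on the Boolean cube `{0,1}^n`. -/
noncomputable def chi {n : ℕ} (S x : Fin n → ZMod 2) : ℝ :=
  (-1 : ℝ) ^ (∑ i, S i * x i).val

/-- The Fourier coefficient of `(-1)^f` at `S`. -/
noncomputable def fourierHat {n : ℕ} (f : (Fin n → ZMod 2) → ZMod 2)
    (S : Fin n → ZMod 2) : ℝ :=
  (2 ^ n : ℝ)⁻¹ * ∑ x : Fin n → ZMod 2, (-1 : ℝ) ^ (f x).val * chi S x

/-- The uniform quantum example `|ψ_f⟩` of a Boolean function `f`. -/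
noncomputable def quantumExample {n : ℕ} (f : (Fin n → ZMod 2) → ZMod 2) :
    (Fin n → ZMod 2) × ZMod 2 → ℂ :=
  fun p => if p.2 = f p.1 then (((Real.sqrt (2 ^ n))⁻¹ : ℝ) : ℂ) else 0

/-- The `(n+1)`-qubit Hadamard transform. -/
noncomputable def hadamard (n : ℕ) :
    Matrix ((Fin n → ZMod 2) × ZMod 2) ((Fin n → ZMod 2) × ZMod 2) ℂ :=
  fun p q =>
    (((Real.sqrt (2 ^ (n + 1)))⁻¹ : ℝ) : ℂ) *
      (-1 : ℂ) ^ ((∑ i, p.1 i * q.1 i) + p.2 * q.2).val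

/-- The projector `Σ_{S ∈ T} |S⟩⟨S| ⊗ I₂` onto Fourier characters in `T`. -/
noncomputable def projT {n : ℕ} (T : Finset (Fin n → ZMod 2)) :
    Matrix ((Fin n → ZMod 2) × ZMod 2) ((Fin n → ZMod 2) × ZMod 2) ℂ :=
  fun p q => if p.1 = q.1 ∧ p.1 ∈ T ∧ p.2 = q.2 then 1 else 0

/-- The projector `I_{2^n} ⊗ |1⟩⟨1|` onto the last qubit being `1`. -/
noncomputable def projLast (n : ℕ) :
    Matrix ((Fin n → ZMod 2) × ZMod 2) ((Fin n → ZMod 2) × ZMod 2) ℂ :=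
  fun p q => if p = q ∧ p.2 = 1 then 1 else 0

/-! Summing over the last qubit picks out `b = f x`, so the `(S, 1)` entry of `H_{n+1} ψ_f` is
`f̂(S) / √2`. Since `H_{n+1}` is Hermitian, `⟨ψ_f, H Π M̃ Π H ψ_f⟩` is the quadratic form of the
diagonal projector `Π M̃ Π` at `H ψ_f`, i.e. the mass of `H ψ_f` on `{(S, 1) | S ∈ T}`. -/

lemma neg_one_pow_val_add {R : Type*} [Ring R] (a b : ZMod 2) :
    (-1 : R) ^ (a + b).val = (-1) ^ a.val * (-1) ^ b.val := by
  rw [ZMod.val_add, ← neg_one_pow_eq_pow_mod_two, pow_add]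

lemma Matrix.IsHermitian.star_dotProduct_mul_mul_mulVec {ι 𝕜 : Type*} [Fintype ι] [RCLike 𝕜]
    {H : Matrix ι ι 𝕜} (hH : H.IsHermitian) (A : Matrix ι ι 𝕜) (v : ι → 𝕜) :
    star v ⬝ᵥ ((H * A * H) *ᵥ v) = star (H *ᵥ v) ⬝ᵥ (A *ᵥ (H *ᵥ v)) := by
  rw [← mulVec_mulVec, ← mulVec_mulVec, dotProduct_mulVec, star_mulVec, hH.eq]

lemma star_dotProduct_diagonal_mulVec {ι 𝕜 : Type*} [Fintype ι] [DecidableEq ι] [RCLike 𝕜]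
    (d v : ι → 𝕜) : star v ⬝ᵥ (diagonal d *ᵥ v) = ∑ i, d i * ‖v i‖ ^ 2 := by
  simp only [dotProduct, mulVec_diagonal, Pi.star_apply, RCLike.star_def]
  exact Finset.sum_congr rfl fun i _ => by rw [mul_left_comm, RCLike.conj_mul]

lemma hadamard_isHermitian (n : ℕ) : (hadamard n).IsHermitian := by
  ext p q
  simp only [conjTranspose_apply, _root_.hadamard, star_mul', star_pow, star_neg, star_one,
    Complex.star_def, Complex.conj_ofReal, mul_comm p.2, mul_comm (p.1 _)]

lemma projLast_eq_diagonal (n : ℕ) :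
    projLast n = diagonal fun p => if p.2 = 1 then 1 else 0 := by
  ext p q
  by_cases h : p = q <;> simp [projLast, diagonal, h]

lemma projT_eq_diagonal {n : ℕ} (T : Finset (Fin n → ZMod 2)) :
    projT T = diagonal fun p => if p.1 ∈ T then 1 else 0 := by
  ext p q
  by_cases h : p = q
  · simp [projT, diagonal, h]
  · simp only [projT, diagonal, of_apply, h, if_false, ite_eq_right_iff]
    rintro ⟨h₁, -, h₂⟩
    exact absurd (Prod.ext h₁ h₂) h

lemma star_dotProduct_hadamard_observable_mulVec {n : ℕ} (T : Finset (Fin n → ZMod 2))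
    (ψ : (Fin n → ZMod 2) × ZMod 2 → ℂ) :
    star ψ ⬝ᵥ ((hadamard n * projLast n * projT T * projLast n * hadamard n) *ᵥ ψ) =
      ((∑ S ∈ T, ‖(hadamard n *ᵥ ψ) (S, 1)‖ ^ 2 : ℝ) : ℂ) := by
  rw [show hadamard n * projLast n * projT T * projLast n * hadamard n =
      hadamard n * (projLast n * projT T * projLast n) * hadamard n by noncomm_ring,
    (hadamard_isHermitian n).star_dotProduct_mul_mul_mulVec, projLast_eq_diagonal,
    projT_eq_diagonal, diagonal_mul_diagonal, diagonal_mul_diagonal,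
    star_dotProduct_diagonal_mulVec, RCLike.ofReal_eq_complex_ofReal, Fintype.sum_prod_type]
  push_cast
  simp only [ite_mul, one_mul, zero_mul, mul_ite, mul_one, mul_zero, Fintype.sum_ite_eq',
    Finset.sum_ite_mem, Finset.univ_inter, if_true]

lemma hadamard_mulVec_quantumExample_apply_one {n : ℕ} (f : (Fin n → ZMod 2) → ZMod 2)
    (S : Fin n → ZMod 2) :
    (hadamard n *ᵥ quantumExample f) (S, 1) = (((Real.sqrt 2)⁻¹ * fourierHat f S : ℝ) : ℂ) := by
  have hscale :
      (Real.sqrt (2 ^ (n + 1)))⁻¹ * (Real.sqrt (2 ^ n))⁻¹ = (Real.sqrt 2)⁻¹ * (2 ^ n)⁻¹ := by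
    rw [← mul_inv, ← mul_inv, pow_succ, Real.sqrt_mul (by positivity), mul_right_comm,
      Real.mul_self_sqrt (by positivity), mul_comm]
  simp only [mulVec, dotProduct, _root_.hadamard, quantumExample, fourierHat, chi,
    Fintype.sum_prod_type, mul_ite, mul_zero, Fintype.sum_ite_eq', one_mul, neg_one_pow_val_add]
  rw [← mul_assoc, ← hscale]
  push_cast
  rw [Finset.mul_sum]
  exact Finset.sum_congr rfl fun x _ => by ring

lemma norm_sq_hadamard_mulVec_quantumExample_apply_one {n : ℕ}
    (f : (Fin n → ZMod 2) → ZMod 2) (S : Fin n → ZMod 2) :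
    ‖(hadamard n *ᵥ quantumExample f) (S, 1)‖ ^ 2 = 1 / 2 * fourierHat f S ^ 2 := by
  rw [hadamard_mulVec_quantumExample_apply_one, Complex.norm_real, Real.norm_eq_abs, sq_abs,
    mul_pow, inv_pow, Real.sq_sqrt zero_le_two, one_div]

theorem stmt1_general {n : ℕ} (f : (Fin n → ZMod 2) → ZMod 2)
    (T : Finset (Fin n → ZMod 2)) :
    (∑ S ∈ T,
        ‖(hadamard n).mulVec (quantumExample f) (S, 1)‖ ^ 2) =
      (1 / 2) * ∑ S ∈ T, fourierHat f S ^ 2 ∧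
    (star (quantumExample f) ⬝ᵥ
        ((hadamard n * projLast n * projT T * projLast n *
          hadamard n).mulVec (quantumExample f))) =
      (((1 / 2) * ∑ S ∈ T, fourierHat f S ^ 2 : ℝ) : ℂ) := by
  have hmass : ∑ S ∈ T, ‖(hadamard n *ᵥ quantumExample f) (S, 1)‖ ^ 2 =
      1 / 2 * ∑ S ∈ T, fourierHat f S ^ 2 := by
    simp only [norm_sq_hadamard_mulVec_quantumExample_apply_one, Finset.mul_sum]
  exact ⟨hmass, by rw [star_dotProduct_hadamard_observable_mulVec, hmass]⟩

/-- A single quantum statistical query estimates the Fourier mass of `f` on a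
set `T ⊆ {0,1}^n`: the squared magnitudes of the `(S,1)`-entries of
`H_{n+1}|ψ_f⟩` over `S ∈ T` sum to `(1/2)·Σ_{S ∈ T} f̂(S)²`, and equivalently
the observable `M' = H_{n+1}·Π·M̃·Π·H_{n+1}` with `M̃ = Σ_{S∈T}|S⟩⟨S| ⊗ I₂`
and `Π = I ⊗ |1⟩⟨1|` has expectation `⟨ψ_f|M'|ψ_f⟩ = (1/2)·Σ_{S ∈ T} f̂(S)²`. -/
theorem stmt1 {n : ℕ} (hn : 1 ≤ n) (f : (Fin n → ZMod 2) → ZMod 2)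
    (T : Finset (Fin n → ZMod 2)) :
    (∑ S ∈ T,
        ‖(hadamard n).mulVec (quantumExample f) (S, 1)‖ ^ 2) =
      (1 / 2) * ∑ S ∈ T, fourierHat f S ^ 2 ∧
    (star (quantumExample f) ⬝ᵥ
        ((hadamard n * projLast n * projT T * projLast n *
          hadamard n).mulVec (quantumExample f))) =
      (((1 / 2) * ∑ S ∈ T, fourierHat f S ^ 2 : ℝ) : ℂ) :=
  stmt1_general f T
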